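/- Let k ≤ n be positive integers. The family of linear functionals {β_ĉ : c ∈ 𝒞(k)} on V^{⊗2k} is linearly independent. -/
import Mathlib


open scoped BigOperators

noncomputable section

/-- `Vs n` is the even symplectic vector space `ℂ^{2n}` with canonical coordinates
`p₁,…,p_n` (indexed by `Sum.inl`) and `q₁,…,q_n` (indexed by `Sum.inr`). -/
abbrev Vs (n : ℕ) : Type := (Fin n ⊕ Fin n) → ℂ

/-- the basis vector `p_i`. -/
def pvec (n : ℕ) (i : Fin n) : Vs n := Pi.single (Sum.inl i) 1

/-- the basis vector `q_i`. -/
def qvec (n : ℕ) (i : Fin n) : Vs n := Pi.single (Sum.inr i) 1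

/-- The canonical symplectic form on `ℂ^{2n}`, determined by `⟨p_i,q_j⟩ = δ_{ij}`,
`⟨p_i,p_j⟩ = ⟨q_i,q_j⟩ = 0` and antisymmetry. -/
def symp (n : ℕ) (a b : Vs n) : ℂ :=
  ∑ i : Fin n, (a (Sum.inl i) * b (Sum.inr i) - a (Sum.inr i) * b (Sum.inl i))

/-- `ξ ∈ sp(2n,ℂ)`. -/
def IsSp (n : ℕ) (ξ : Vs n →ₗ[ℂ] Vs n) : Prop :=
  ∀ a b : Vs n, symp n (ξ a) b + symp n a (ξ b) = 0

/-- An oriented chord diagram on `{1,…,2k}`: a list of `k` ordered pairs such that every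
element of `Fin (2k)` occurs as an entry (hence, by cardinality, exactly once). -/
def IsOCD (k : ℕ) (c : Fin k → Fin (2 * k) × Fin (2 * k)) : Prop :=
  Function.Surjective (fun x : Fin k × Bool => if x.2 then (c x.1).2 else (c x.1).1)

/-- The canonical representative `ĉ` of an (unoriented) chord diagram: each pair is ordered
increasingly, and the pairs are listed in increasing order of their first entries.  Chord
diagrams `c ∈ 𝒞(k)` are in canonical bijection with such representatives. -/
def IsCDRep (k : ℕ) (c : Fin k → Fin (2 * k) × Fin (2 * k)) : Prop :=
  IsOCD k c ∧ (∀ r : Fin k, (c r).1 < (c r).2) ∧ ∀ r s : Fin k, r < s → (c r).1 < (c s).1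

/-- `β_c`, evaluated on the pure tensor `x₁ ⊗ ⋯ ⊗ x_{2k}`:
`β_c(x₁⊗⋯⊗x_{2k}) = ∏_r ⟨x_{i_r}, x_{j_r}⟩`. -/
def betaFun (n k : ℕ) (c : Fin k → Fin (2 * k) × Fin (2 * k)) (x : Fin (2 * k) → Vs n) : ℂ :=
  ∏ r : Fin k, symp n (x (c r).1) (x (c r).2)

/-- The pure tensor `u_k(c)` (for `k ≤ n`): its `i_r`-th tensor factor is `p_r` and its
`j_r`-th tensor factor is `q_r`. -/
def uFam (n k : ℕ) (hkn : k ≤ n) (c : Fin k → Fin (2 * k) × Fin (2 * k)) :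
    Fin (2 * k) → Vs n := fun i =>
  ∑ r : Fin k,
    ((if i = (c r).1 then pvec n (Fin.castLE hkn r) else 0) +
     (if i = (c r).2 then qvec n (Fin.castLE hkn r) else 0))

instance (k : ℕ) (c : Fin k → Fin (2 * k) × Fin (2 * k)) : Decidable (IsOCD k c) :=
  inferInstanceAs (Decidable (Function.Surjective _))

instance (k : ℕ) (c : Fin k → Fin (2 * k) × Fin (2 * k)) : Decidable (IsCDRep k c) :=
  inferInstanceAs (Decidable (_ ∧ _))

lemma symp_pq (n : ℕ) (a b : Fin n) : symp n (pvec n a) (qvec n b) = if a = b then 1 else 0 := by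
  simp [symp, pvec, qvec, Pi.single_apply, eq_comm]

lemma symp_pp (n : ℕ) (a b : Fin n) : symp n (pvec n a) (pvec n b) = 0 := by
  simp [symp, pvec, qvec, Pi.single_apply]

lemma symp_qq (n : ℕ) (a b : Fin n) : symp n (qvec n a) (qvec n b) = 0 := by
  simp [symp, pvec, qvec, Pi.single_apply]

lemma symp_qp (n : ℕ) (a b : Fin n) : symp n (qvec n a) (pvec n b) = -if a = b then 1 else 0 := by
  simp [symp, pvec, qvec, Pi.single_apply, eq_comm]

lemma entries_injective {k : ℕ} {c : Fin k → Fin (2 * k) × Fin (2 * k)} (h : IsOCD k c) :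
    Function.Injective (fun x : Fin k × Bool => if x.2 then (c x.1).2 else (c x.1).1) :=
  ((Fintype.bijective_iff_surjective_and_card _).2 ⟨h, by simp [mul_comm]⟩).1

lemma uFam_fst (n k : ℕ) (hkn : k ≤ n) {c : Fin k → Fin (2 * k) × Fin (2 * k)}
    (h : IsOCD k c) (s : Fin k) :
    uFam n k hkn c (c s).1 = pvec n (Fin.castLE hkn s) := by
  have hinj := entries_injective h
  unfold uFam
  rw [Finset.sum_eq_single s]
  · have h1 : (c s).1 ≠ (c s).2 := fun he => by
      have := hinj (a₁ := (s, false)) (a₂ := (s, true)) (by simpa using he)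
      simp at this
    simp [h1]
  · intro r _ hr
    have h1 : (c s).1 ≠ (c r).1 := fun he => hr (by
      have := hinj (a₁ := (s, false)) (a₂ := (r, false)) (by simpa using he)
      simpa using this.symm)
    have h2 : (c s).1 ≠ (c r).2 := fun he => by
      have := hinj (a₁ := (s, false)) (a₂ := (r, true)) (by simpa using he)
      simp at this
    simp [h1, h2]
  · simp

lemma uFam_snd (n k : ℕ) (hkn : k ≤ n) {c : Fin k → Fin (2 * k) × Fin (2 * k)}
    (h : IsOCD k c) (s : Fin k) :
    uFam n k hkn c (c s).2 = qvec n (Fin.castLE hkn s) := by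
  have hinj := entries_injective h
  unfold uFam
  rw [Finset.sum_eq_single s]
  · have h1 : (c s).2 ≠ (c s).1 := fun he => by
      have := hinj (a₁ := (s, true)) (a₂ := (s, false)) (by simpa using he)
      simp at this
    simp [h1]
  · intro r _ hr
    have h1 : (c s).2 ≠ (c r).1 := fun he => by
      have := hinj (a₁ := (s, true)) (a₂ := (r, false)) (by simpa using he)
      simp at this
    have h2 : (c s).2 ≠ (c r).2 := fun he => hr (by
      have := hinj (a₁ := (s, true)) (a₂ := (r, true)) (by simpa using he)
      simpa using this.symm)
    simp [h1, h2]
  · simp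

lemma beta_eval (n k : ℕ) (hkn : k ≤ n) {c c' : Fin k → Fin (2 * k) × Fin (2 * k)}
    (hc : IsCDRep k c) (hc' : IsCDRep k c') :
    betaFun n k c' (uFam n k hkn c) = if c' = c then 1 else 0 := by
  by_cases hcc : c' = c
  · subst hcc
    rw [if_pos rfl]
    unfold betaFun
    apply Finset.prod_eq_one
    intro r _
    rw [uFam_fst n k hkn hc'.1 r, uFam_snd n k hkn hc'.1 r, symp_pq]
    simp
  · rw [if_neg hcc, betaFun]
    by_contra hne
    -- each factor is nonzero
    have hfac : ∀ r : Fin k, symp n (uFam n k hkn c (c' r).1) (uFam n k hkn c (c' r).2) ≠ 0 := by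
      intro r hr0
      exact hne (Finset.prod_eq_zero (Finset.mem_univ r) hr0)
    -- for each r, c' r = c (σ r) for some σ r
    have hexists : ∀ r : Fin k, ∃ s : Fin k, c' r = c s := by
      intro r
      obtain ⟨⟨s, bs⟩, hs⟩ := hc.1 (c' r).1
      obtain ⟨⟨t, bt⟩, ht⟩ := hc.1 (c' r).2
      have hfr := hfac r
      cases bs <;> cases bt <;> simp only [Bool.false_eq_true, if_false, if_true] at hs ht
      · -- (c' r).1 = (c s).1, (c' r).2 = (c t).1 : pvec, pvec → 0
        rw [← hs, ← ht, uFam_fst n k hkn hc.1, uFam_fst n k hkn hc.1, symp_pp] at hfr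
        exact absurd rfl hfr
      · -- .1 = (c s).1, .2 = (c t).2
        rw [← hs, ← ht, uFam_fst n k hkn hc.1, uFam_snd n k hkn hc.1, symp_pq] at hfr
        have hst : s = t := by
          by_contra h
          have : Fin.castLE hkn s ≠ Fin.castLE hkn t := fun he => h (Fin.castLE_injective hkn he)
          simp [this] at hfr
        subst hst
        exact ⟨s, Prod.ext hs.symm ht.symm⟩
      · -- .1 = (c s).2, .2 = (c t).1 : qvec, pvec, nonzero forces s = t, order contradiction
        rw [← hs, ← ht, uFam_snd n k hkn hc.1, uFam_fst n k hkn hc.1, symp_qp] at hfr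
        have hst : s = t := by
          by_contra h
          have : Fin.castLE hkn s ≠ Fin.castLE hkn t := fun he => h (Fin.castLE_injective hkn he)
          simp [this] at hfr
        subst hst
        have h1 := hc'.2.1 r
        have h2 := hc.2.1 s
        rw [← hs, ← ht] at h1
        exact absurd (h1.trans h2) (lt_irrefl _)
      · rw [← hs, ← ht, uFam_snd n k hkn hc.1, uFam_snd n k hkn hc.1, symp_qq] at hfr
        exact absurd rfl hfr
    choose σ hσ using hexists
    have hmono : StrictMono σ := by
      intro r s hrs
      have h1 := hc'.2.2 r s hrs
      rw [hσ r, hσ s] at h1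
      by_contra h
      rcases lt_or_eq_of_le (not_lt.1 h) with h2 | h2
      · exact absurd (h1.trans (hc.2.2 _ _ h2)) (lt_irrefl _)
      · rw [h2] at h1; exact absurd h1 (lt_irrefl _)
    have hrange : Set.range σ = Set.range (id : Fin k → Fin k) := by
      rw [Set.range_id]
      exact Set.eq_univ_of_forall fun s =>
        (Finite.injective_iff_surjective.1 hmono.injective s).imp fun r hr => hr
    have hwf : WellFoundedLT (Fin k) := Finite.to_wellFoundedLT
    have hid : σ = id := (hmono.range_inj strictMono_id).1 hrange
    exact hcc (funext fun r => by rw [hσ r, hid]; rfl)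


/-- STATEMENT 7: for `k ≤ n` the family of functionals `{β_ĉ : c ∈ 𝒞(k)}` on `V^{⊗2k}`
is linearly independent.  (A functional on `V^{⊗2k}` is represented by its restriction to
pure tensors, i.e. by a function `(Fin (2k) → V) → ℂ`.) -/
theorem beta_linearIndependent (n k : ℕ) (hk : 0 < k) (hkn : k ≤ n) :
    LinearIndependent ℂ
      (fun c : {c : Fin k → Fin (2 * k) × Fin (2 * k) // IsCDRep k c} =>
        betaFun n k c.1) := by
  rw [linearIndependent_iff']
  intro s g hsum c hc
  have := congrFun hsum (uFam n k hkn c.1)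
  simp only [Finset.sum_apply, Pi.smul_apply, Pi.zero_apply, smul_eq_mul] at this
  have h2 : ∀ c' : {c // IsCDRep k c},
      betaFun n k c'.1 (uFam n k hkn c.1) = if c' = c then 1 else 0 := by
    intro c'
    rw [beta_eval n k hkn c.2 c'.2]
    simp [Subtype.ext_iff]
  simp only [h2, mul_ite, mul_one, mul_zero] at this
  rwa [Finset.sum_ite_eq' s c g, if_pos hc] at this

end
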